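/- A set X of density matrices on n qudits corrects t deletion errors (all pairwise t-deletion spheres of distinct elements are disjoint) if and only if its minimum quantum indel distance d_min(X) := min_{ρ₁ ≠ ρ₂ ∈ X} min{ s + u : D^s(ρ₁) ∩ D^u(ρ₂) ≠ ∅ } satisfies d_min(X) ≥ 2t + 1. -/

import Mathlib

open Matrix
open scoped ComplexOrder

/-- Matrices on `n` qudits of level `l`. -/
abbrev QMat (l n : ℕ) := Matrix (Fin n → Fin l) (Fin n → Fin l) ℂ

/-- A quantum state on some finite number of qudits. -/
def QState (l : ℕ) := Σ n : ℕ, QMat l n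

/-- Density matrix: positive semidefinite with trace 1. -/
def IsDensity {l n : ℕ} (ρ : QMat l n) : Prop := ρ.PosSemidef ∧ ρ.trace = 1

def IsDensityS {l : ℕ} (ρ : QState l) : Prop := ρ.2.PosSemidef ∧ ρ.2.trace = 1

/-- Partial trace over the qudit at position `p`. -/
noncomputable def traceOut {l n : ℕ} (p : Fin (n + 1)) (ρ : QMat l (n + 1)) : QMat l n :=
  fun x y => ∑ z : Fin l, ρ (p.insertNth z x) (p.insertNth z y)

/-- Single deletion: all states obtained by tracing out one qudit. -/
def del1 {l : ℕ} : QState l → Set (QState l)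
  | ⟨0, _⟩ => ∅
  | ⟨n + 1, ρ⟩ => { σ | ∃ p : Fin (n + 1), σ = ⟨n, traceOut p ρ⟩ }

/-- Single insertion sphere: density matrices having `ρ` among their single deletions. -/
def ins1 {l : ℕ} (ρ : QState l) : Set (QState l) :=
  { σ | IsDensityS σ ∧ ρ ∈ del1 σ }

def delSet {l : ℕ} (X : Set (QState l)) : Set (QState l) := ⋃ ρ ∈ X, del1 ρ
def insSet {l : ℕ} (X : Set (QState l)) : Set (QState l) := ⋃ ρ ∈ X, ins1 ρ

/-- `s`-deletion errors. -/
def Dq {l : ℕ} : ℕ → Set (QState l) → Set (QState l)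
  | 0, X => X
  | s + 1, X => delSet (Dq s X)

/-- `t`-insertion errors. -/
def Iq {l : ℕ} : ℕ → Set (QState l) → Set (QState l)
  | 0, X => X
  | t + 1, X => insSet (Iq t X)

/-- Quantum indel distance. -/
noncomputable def qdist {l : ℕ} (ρ₁ ρ₂ : QState l) : ℕ :=
  sInf { k | ∃ s t : ℕ, s + t = k ∧ (Dq s {ρ₁} ∩ Dq t {ρ₂}).Nonempty }

/-! Deleting qudits lowers the number of qudits by one per deletion and preserves the trace.
Hence a common state of `Dq s {ρ₁}` and `Dq u {ρ₂}`, for `ρ₁, ρ₂` on `n` qudits, forces `s = u`,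
and deleting `t - s` further qudits of it gives a common state of the two `t`-deletion spheres;
so `qdist ρ₁ ρ₂ ≤ 2t` exactly when those spheres meet. The infimum defining `qdist` is over a
nonempty set (so not the junk `sInf ∅ = 0`) because states on zero qudits are `1 × 1` matrices,
determined by their trace. -/

lemma trace_traceOut {l n : ℕ} (p : Fin (n + 1)) (ρ : QMat l (n + 1)) :
    (traceOut p ρ).trace = ρ.trace := by
  simp only [Matrix.trace, Matrix.diag, traceOut]
  rw [← Equiv.sum_comp (Fin.insertNthEquiv (fun _ => Fin l) p), Fintype.sum_prod_type,
    Finset.sum_comm]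
  rfl

lemma level_of_mem_del1 {l : ℕ} {σ τ : QState l} (h : σ ∈ del1 τ) : σ.1 + 1 = τ.1 := by
  obtain ⟨_ | m, M⟩ := τ
  · exact h.elim
  · obtain ⟨p, rfl⟩ := h
    rfl

lemma trace_of_mem_del1 {l : ℕ} {σ τ : QState l} (h : σ ∈ del1 τ) :
    σ.2.trace = τ.2.trace := by
  obtain ⟨_ | m, M⟩ := τ
  · exact h.elim
  · obtain ⟨p, rfl⟩ := h
    exact trace_traceOut p M

lemma mem_Dq_succ {l s : ℕ} {X : Set (QState l)} {σ : QState l} :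
    σ ∈ Dq (s + 1) X ↔ ∃ τ ∈ Dq s X, σ ∈ del1 τ := by
  simp [Dq, delSet]

lemma Dq_mono {l : ℕ} {X Y : Set (QState l)} (h : X ⊆ Y) (s : ℕ) : Dq s X ⊆ Dq s Y := by
  induction s with
  | zero => exact h
  | succ s ih =>
    intro σ hσ
    obtain ⟨τ, hτ, hστ⟩ := mem_Dq_succ.1 hσ
    exact mem_Dq_succ.2 ⟨τ, ih hτ, hστ⟩

lemma Dq_Dq {l : ℕ} (a b : ℕ) (X : Set (QState l)) : Dq a (Dq b X) = Dq (a + b) X := by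
  induction a with
  | zero => rw [Nat.zero_add]; rfl
  | succ a ih => rw [Nat.add_right_comm, Dq, Dq, ih]

lemma level_of_mem_Dq {l s : ℕ} {ρ σ : QState l} (h : σ ∈ Dq s {ρ}) : σ.1 + s = ρ.1 := by
  induction s generalizing σ with
  | zero => rw [Set.mem_singleton_iff.1 h]; rfl
  | succ s ih =>
    obtain ⟨τ, hτ, hστ⟩ := mem_Dq_succ.1 h
    rw [← ih hτ, ← level_of_mem_del1 hστ]
    ring

lemma trace_of_mem_Dq {l s : ℕ} {ρ σ : QState l} (h : σ ∈ Dq s {ρ}) :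
    σ.2.trace = ρ.2.trace := by
  induction s generalizing σ with
  | zero => rw [Set.mem_singleton_iff.1 h]
  | succ s ih =>
    obtain ⟨τ, hτ, hστ⟩ := mem_Dq_succ.1 h
    rw [trace_of_mem_del1 hστ, ih hτ]

lemma Dq_singleton_nonempty {l s : ℕ} {ρ : QState l} (h : s ≤ ρ.1) : (Dq s {ρ}).Nonempty := by
  induction s with
  | zero => exact Set.singleton_nonempty ρ
  | succ s ih =>
    obtain ⟨⟨m, M⟩, hσ⟩ := ih (by omega)
    obtain _ | m := m
    · have : 0 + s = ρ.1 := level_of_mem_Dq hσ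
      omega
    · exact ⟨⟨m, traceOut 0 M⟩, mem_Dq_succ.2 ⟨_, hσ, 0, rfl⟩⟩

lemma QState.eq_of_level_zero {l : ℕ} {σ τ : QState l} (hσ : σ.1 = 0) (hτ : τ.1 = 0)
    (htr : σ.2.trace = τ.2.trace) : σ = τ := by
  obtain ⟨m, M⟩ := σ
  obtain ⟨m', M'⟩ := τ
  obtain rfl : m = 0 := hσ
  obtain rfl : m' = 0 := hτ
  congr 1
  ext x y
  obtain rfl := Subsingleton.elim x y
  simpa only [Matrix.trace, Matrix.diag, Fintype.sum_subsingleton _ x] using htr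

lemma Dq_level_inter_nonempty {l : ℕ} {ρ₁ ρ₂ : QState l} (htr : ρ₁.2.trace = ρ₂.2.trace) :
    (Dq ρ₁.1 {ρ₁} ∩ Dq ρ₂.1 {ρ₂}).Nonempty := by
  obtain ⟨σ, hσ⟩ := Dq_singleton_nonempty (le_refl ρ₁.1)
  obtain ⟨τ, hτ⟩ := Dq_singleton_nonempty (le_refl ρ₂.1)
  have hστ : σ = τ := QState.eq_of_level_zero
    (by have := level_of_mem_Dq hσ; omega) (by have := level_of_mem_Dq hτ; omega)
    (by rw [trace_of_mem_Dq hσ, trace_of_mem_Dq hτ, htr])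
  exact ⟨σ, hσ, hστ ▸ hτ⟩

lemma Dq_inter_nonempty_of_le {l s t : ℕ} {ρ₁ ρ₂ : QState l}
    (h : (Dq s {ρ₁} ∩ Dq s {ρ₂}).Nonempty) (hst : s ≤ t) (ht : t ≤ ρ₁.1) :
    (Dq t {ρ₁} ∩ Dq t {ρ₂}).Nonempty := by
  obtain ⟨σ, hσ₁, hσ₂⟩ := h
  obtain ⟨τ, hτ⟩ := Dq_singleton_nonempty (s := t - s) (ρ := σ)
    (by have := level_of_mem_Dq hσ₁; omega)
  have hts : t - s + s = t := by omega
  refine ⟨τ, ?_, ?_⟩ <;> rw [← hts, ← Dq_Dq]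
  · exact Dq_mono (Set.singleton_subset_iff.2 hσ₁) _ hτ
  · exact Dq_mono (Set.singleton_subset_iff.2 hσ₂) _ hτ

lemma qdist_le {l s u : ℕ} {ρ₁ ρ₂ : QState l} (h : (Dq s {ρ₁} ∩ Dq u {ρ₂}).Nonempty) :
    qdist ρ₁ ρ₂ ≤ s + u :=
  Nat.sInf_le ⟨s, u, rfl, h⟩

lemma exists_add_eq_qdist {l : ℕ} {ρ₁ ρ₂ : QState l} (htr : ρ₁.2.trace = ρ₂.2.trace) :
    ∃ s u, s + u = qdist ρ₁ ρ₂ ∧ (Dq s {ρ₁} ∩ Dq u {ρ₂}).Nonempty :=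
  Nat.sInf_mem (s := {k | ∃ s u, s + u = k ∧ (Dq s {ρ₁} ∩ Dq u {ρ₂}).Nonempty})
    ⟨_, _, _, rfl, Dq_level_inter_nonempty htr⟩

lemma Dq_inter_eq_empty_iff_le_qdist {l t : ℕ} {ρ₁ ρ₂ : QState l} (hlevel : ρ₁.1 = ρ₂.1)
    (htr : ρ₁.2.trace = ρ₂.2.trace) (ht : t ≤ ρ₁.1) :
    Dq t {ρ₁} ∩ Dq t {ρ₂} = ∅ ↔ 2 * t + 1 ≤ qdist ρ₁ ρ₂ := by
  rw [← Set.not_nonempty_iff_eq_empty, ← not_lt, Nat.lt_succ_iff, not_iff_not]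
  refine ⟨fun h => two_mul t ▸ qdist_le h, fun h => ?_⟩
  obtain ⟨s, u, hsu, σ, hσ₁, hσ₂⟩ := exists_add_eq_qdist htr
  have hs : s = u := by
    have := level_of_mem_Dq hσ₁
    have := level_of_mem_Dq hσ₂
    omega
  subst hs
  exact Dq_inter_nonempty_of_le ⟨σ, hσ₁, hσ₂⟩ (by omega) ht

/-- A set `X` of density matrices on `n` qudits corrects `t` deletion errors
iff its minimum quantum indel distance is at least `2t + 1`, i.e., all pairwise
indel distances of distinct elements are at least `2t + 1`. -/
theorem corrects_del_iff_qdist_ge {l n t : ℕ} (htn : t ≤ n)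
    (X : Set (QState l)) (hX : ∀ ρ ∈ X, ρ.1 = n ∧ IsDensityS ρ) :
    (∀ ρ₁ ∈ X, ∀ ρ₂ ∈ X, ρ₁ ≠ ρ₂ → Dq t {ρ₁} ∩ Dq t {ρ₂} = ∅) ↔
    (∀ ρ₁ ∈ X, ∀ ρ₂ ∈ X, ρ₁ ≠ ρ₂ → 2 * t + 1 ≤ qdist ρ₁ ρ₂) := by
  refine forall₂_congr fun ρ₁ h₁ => forall₂_congr fun ρ₂ h₂ => imp_congr_right fun _ => ?_
  obtain ⟨hn₁, -, htr₁⟩ := hX ρ₁ h₁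
  obtain ⟨hn₂, -, htr₂⟩ := hX ρ₂ h₂
  exact Dq_inter_eq_empty_iff_le_qdist (hn₁.trans hn₂.symm) (htr₁.trans htr₂.symm) (hn₁ ▸ htn)
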